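/- arXiv:1904.08413 — 5 statements merged into one kernel-verified Lean document; each statement's English description precedes it below -/
import Mathlib

section
/- (Yoneda and co-Yoneda embedding theorem.) Let V be a commutative unital quantale with residuation ⇨ and let (A, Hom) be a V-category. Then: (a) for every b ∈ A the function a ↦ Hom a b is a presheaf, i.e. Hom a a' ≤ (Hom a' b) ⇨ (Hom a b) for all a, a'; (b) for every a ∈ A the function b ↦ Hom a b is a copresheaf, i.e. Hom b b' ≤ (Hom a b) ⇨ (Hom a b') for all b, b'; (c) the Yoneda embedding is fully faithful: Hom b b' = ⨅_{a ∈ A} ((Hom a b) ⇨ (Hom a b')) for all b, b'; (d) the co-Yoneda embedding is fully faithful: Hom a a' = ⨅_{b ∈ A} ((Hom a' b) ⇨ (Hom a b)) for all a, a'. -/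
/-- Residuation of a commutative unital quantale. -/
def res {V : Type*} [CompleteLattice V] [Mul V] (y z : V) : V :=
  sSup {x | x * y ≤ z}

theorem yoneda_coyoneda_embedding {V A : Type*} [CompleteLattice V] [CommMonoid V]
    (hq : ∀ (y : V) (s : Set V), sSup s * y = ⨆ x ∈ s, x * y)
    (Hom : A → A → V)
    (comp : ∀ a b c, Hom a b * Hom b c ≤ Hom a c)
    (idl : ∀ a, (1 : V) ≤ Hom a a) :
    (∀ b a a', Hom a a' ≤ res (Hom a' b) (Hom a b)) ∧
    (∀ a b b', Hom b b' ≤ res (Hom a b) (Hom a b')) ∧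
    (∀ b b', Hom b b' = ⨅ a, res (Hom a b) (Hom a b')) ∧
    (∀ a a', Hom a a' = ⨅ b, res (Hom a' b) (Hom a b)) := by
  have hmonoL : ∀ x x' y : V, x ≤ x' → x * y ≤ x' * y := by
    intro x x' y h
    have hs : sSup {x, x'} = x' := by
      rw [sSup_pair, sup_eq_right.mpr h]
    calc x * y ≤ ⨆ u ∈ ({x, x'} : Set V), u * y :=
          le_iSup₂ (f := fun u (_ : u ∈ _) => u * y) x (by simp)
      _ = sSup {x, x'} * y := (hq y _).symm
      _ = x' * y := by rw [hs]
  have adj2 : ∀ x y z : V, x * y ≤ z → x ≤ res y z := fun x y z h => le_sSup h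
  have adj1 : ∀ x y z : V, x ≤ res y z → x * y ≤ z := by
    intro x y z h
    calc x * y ≤ sSup {u | u * y ≤ z} * y := hmonoL _ _ _ h
      _ = ⨆ u ∈ {u | u * y ≤ z}, u * y := hq y _
      _ ≤ z := iSup₂_le fun u hu => hu
  have ha : ∀ b a a', Hom a a' ≤ res (Hom a' b) (Hom a b) :=
    fun b a a' => adj2 _ _ _ (comp a a' b)
  have hb : ∀ a b b', Hom b b' ≤ res (Hom a b) (Hom a b') := by
    intro a b b'
    exact adj2 _ _ _ (by rw [mul_comm]; exact comp a b b')
  refine ⟨ha, hb, fun b b' => ?_, fun a a' => ?_⟩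
  · refine le_antisymm (le_iInf fun a => hb a b b') ?_
    have h1 : (⨅ a, res (Hom a b) (Hom a b')) ≤ res (Hom b b) (Hom b b') := iInf_le _ b
    have h2 := adj1 _ _ _ h1
    calc (⨅ a, res (Hom a b) (Hom a b')) = (⨅ a, res (Hom a b) (Hom a b')) * 1 := (mul_one _).symm
      _ = 1 * (⨅ a, res (Hom a b) (Hom a b')) := mul_comm _ _
      _ ≤ Hom b b * (⨅ a, res (Hom a b) (Hom a b')) := hmonoL _ _ _ (idl b)
      _ = (⨅ a, res (Hom a b) (Hom a b')) * Hom b b := mul_comm _ _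
      _ ≤ Hom b b' := h2
  · refine le_antisymm (le_iInf fun b => ha b a a') ?_
    have h1 : (⨅ b, res (Hom a' b) (Hom a b)) ≤ res (Hom a' a') (Hom a a') := iInf_le _ a'
    have h2 := adj1 _ _ _ h1
    calc (⨅ b, res (Hom a' b) (Hom a b)) = 1 * (⨅ b, res (Hom a' b) (Hom a b)) := (one_mul _).symm
      _ ≤ Hom a' a' * (⨅ b, res (Hom a' b) (Hom a b)) := hmonoL _ _ _ (idl a')
      _ = (⨅ b, res (Hom a' b) (Hom a b)) * Hom a' a' := mul_comm _ _
      _ ≤ Hom a a' := h2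
end

section
/- For all x, y, z : EReal, the adjointness relation x ⊕ y ≥ z ↔ x ≥ z - y holds, where ⊕ is the dual addition x ⊕ y := -((-x) + (-y)) and - is Mathlib's EReal subtraction. (Equivalently: for all a, b, c : EReal, a + b ≤ c ↔ a ≤ -(b - c).) -/
/-- Dual addition on `EReal`: `x ⊕ y = -((-x) + (-y))`. -/
noncomputable def oplus (x y : EReal) : EReal := -((-x) + (-y))

lemma ereal_key (a b c : EReal) : a + b ≤ c ↔ a ≤ -(b - c) := by
  induction a <;> induction b <;> induction c <;>
    simp_all [sub_eq_add_neg, EReal.add_bot, EReal.bot_add, EReal.top_add_top,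
      EReal.coe_add, ← EReal.coe_neg, ← EReal.coe_add, EReal.coe_le_coe_iff]

theorem ereal_adjointness :
    (∀ x y z : EReal, z ≤ oplus x y ↔ z - y ≤ x) ∧
    (∀ a b c : EReal, a + b ≤ c ↔ a ≤ -(b - c)) := by
  refine ⟨fun x y z => ?_, ereal_key⟩
  rw [oplus, ← neg_neg z, EReal.neg_le, neg_neg, ereal_key, EReal.neg_le, neg_neg,
    sub_eq_add_neg, sub_eq_add_neg, neg_neg, add_comm]
end

section
/- Let (A, d) be an EReal-category and let L := {p : A → EReal | ∀ a b, p b - p a ≤ d a b} be the set of nonexpansive maps from A to EReal. Then (A, L) is an EReal-extended L-convex set: (a) for every subset S ⊆ L, the pointwise supremum fun a ↦ ⨆_{p ∈ S} p a and the pointwise infimum fun a ↦ ⨅_{p ∈ S} p a belong to L; (b) for every p ∈ L and every α : EReal, the function fun a ↦ p a ⊕ α belongs to L. -/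
/-- The set of nonexpansive maps from an `EReal`-category `(A, d)` to `EReal`. -/
def nonexp {A : Type*} (d : A → A → EReal) : Set (A → EReal) :=
  {p | ∀ a b, p b - p a ≤ d a b}

/-!
Mathlib's subtraction on `EReal` is left adjoint to dual addition, with no side conditions at
`⊥` or `⊤`: `x - y ≤ z ↔ x ≤ y ⊕ z`. So `p` is nonexpansive iff `p b ≤ p a ⊕ d a b` for all
`a b`, a condition preserved by suprema and by `· ⊕ α` (which is monotone, commutative and
associative); by the symmetry `x - y ≤ z ↔ x - z ≤ y` of the adjunction it is also equivalent to
`p b - d a b ≤ p a`, which is preserved by infima.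
-/

lemma oplus_comm (x y : EReal) : oplus x y = oplus y x := by
  rw [oplus, oplus, add_comm]

lemma oplus_right_comm (x y z : EReal) : oplus (oplus x y) z = oplus (oplus x z) y := by
  simp only [oplus, neg_neg, add_right_comm]

lemma oplus_le_oplus_right {x y : EReal} (h : x ≤ y) (z : EReal) : oplus x z ≤ oplus y z :=
  EReal.neg_le_neg_iff.2 (add_le_add_left (EReal.neg_le_neg_iff.2 h) _)

lemma oplus_coe (x : EReal) (r : ℝ) : oplus x r = x + r := by
  induction x with
  | bot => simp [oplus]
  | coe a => simp only [oplus]; norm_cast; ring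
  | top => simp [oplus]

lemma EReal.sub_le_iff_le_oplus {x y z : EReal} : x - y ≤ z ↔ x ≤ oplus y z := by
  induction y with
  | bot => induction x <;> induction z <;> simp [oplus]
  | coe r => rw [oplus_comm, oplus_coe, EReal.sub_le_iff_le_add (.inl (by simp)) (.inl (by simp))]
  | top => simp [oplus]

lemma EReal.sub_le_comm {x y z : EReal} : x - y ≤ z ↔ x - z ≤ y := by
  rw [EReal.sub_le_iff_le_oplus, EReal.sub_le_iff_le_oplus, oplus_comm]

section Nonexp

variable {A : Type*} {d : A → A → EReal}

lemma mem_nonexp_iff_le_oplus {p : A → EReal} :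
    p ∈ nonexp d ↔ ∀ a b, p b ≤ oplus (p a) (d a b) :=
  forall₂_congr fun _ _ => EReal.sub_le_iff_le_oplus

lemma mem_nonexp_iff_sub_le {p : A → EReal} : p ∈ nonexp d ↔ ∀ a b, p b - d a b ≤ p a :=
  forall₂_congr fun _ _ => EReal.sub_le_comm

lemma biSup_mem_nonexp {S : Set (A → EReal)} (hS : S ⊆ nonexp d) :
    (fun a => ⨆ p ∈ S, p a) ∈ nonexp d :=
  mem_nonexp_iff_le_oplus.2 fun a b => iSup₂_le fun p hp =>
    (mem_nonexp_iff_le_oplus.1 (hS hp) a b).trans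
      (oplus_le_oplus_right (le_iSup₂ (f := fun p _ => p a) p hp) _)

lemma biInf_mem_nonexp {S : Set (A → EReal)} (hS : S ⊆ nonexp d) :
    (fun a => ⨅ p ∈ S, p a) ∈ nonexp d :=
  mem_nonexp_iff_sub_le.2 fun a b => le_iInf₂ fun p hp =>
    (EReal.sub_le_sub (iInf₂_le (f := fun p _ => p b) p hp) le_rfl).trans
      (mem_nonexp_iff_sub_le.1 (hS hp) a b)

lemma oplus_const_mem_nonexp {p : A → EReal} (hp : p ∈ nonexp d) (α : EReal) :
    (fun a => oplus (p a) α) ∈ nonexp d :=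
  mem_nonexp_iff_le_oplus.2 fun a b => by
    rw [oplus_right_comm]
    exact oplus_le_oplus_right (mem_nonexp_iff_le_oplus.1 hp a b) α

end Nonexp

theorem nonexp_is_extended_L_convex_general {A : Type*} (d : A → A → EReal) :
    (∀ S ⊆ nonexp d,
      (fun a => ⨆ p ∈ S, p a) ∈ nonexp d ∧ (fun a => ⨅ p ∈ S, p a) ∈ nonexp d) ∧
    (∀ p ∈ nonexp d, ∀ α : EReal, (fun a => oplus (p a) α) ∈ nonexp d) :=
  ⟨fun _ hS => ⟨biSup_mem_nonexp hS, biInf_mem_nonexp hS⟩, fun _ hp => oplus_const_mem_nonexp hp⟩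

theorem nonexp_is_extended_L_convex {A : Type*} (d : A → A → EReal)
    (htri : ∀ a b c, d a c ≤ oplus (d a b) (d b c))
    (hid : ∀ a, d a a ≤ 0) :
    (∀ S ⊆ nonexp d,
      (fun a => ⨆ p ∈ S, p a) ∈ nonexp d ∧ (fun a => ⨅ p ∈ S, p a) ∈ nonexp d) ∧
    (∀ p ∈ nonexp d, ∀ α : EReal, (fun a => oplus (p a) α) ∈ nonexp d) :=
  nonexp_is_extended_L_convex_general d
end

section
/- Let (V, D) be an EReal-extended L-convex set. Then for every p ∈ D and every α : EReal, the function fun v ↦ p v - α (using Mathlib's EReal subtraction) belongs to D. -/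
lemma EReal.sub_bot_eq_iSup_add_coe (x : EReal) : x - ⊥ = ⨆ r : ℝ, x + r := by
  induction x using EReal.rec with
  | bot => simp
  | top => simp
  | coe a =>
    refine (EReal.coe_sub_bot a).trans (iSup_eq_top.2 fun b hb => ?_).symm
    induction b using EReal.rec with
    | bot => exact ⟨0, EReal.bot_lt_coe _⟩
    | top => exact absurd hb (lt_irrefl _)
    | coe c => exact ⟨c - a + 1, by norm_cast; linarith⟩

lemma fun_iSup_mem {V ι : Type*} {D : Set (V → EReal)}
    (hSup : ∀ S ⊆ D, (fun v => ⨆ p ∈ S, p v) ∈ D) {f : ι → V → EReal} (hf : ∀ i, f i ∈ D) :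
    (fun v => ⨆ i, f i v) ∈ D := by
  simpa only [iSup_range] using hSup (Set.range f) (Set.range_subset_iff.2 hf)

theorem lconvex_weight_complete_sub {V : Type*} (D : Set (V → EReal))
    (hOrd : ∀ S ⊆ D, (fun v => ⨆ p ∈ S, p v) ∈ D ∧ (fun v => ⨅ p ∈ S, p v) ∈ D)
    (hWt : ∀ p ∈ D, ∀ α : EReal, (fun v => oplus (p v) α) ∈ D) :
    ∀ p ∈ D, ∀ α : EReal, (fun v => p v - α) ∈ D := by
  have hSup : ∀ S ⊆ D, (fun v => ⨆ p ∈ S, p v) ∈ D := fun S hS => (hOrd S hS).1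
  have hAddCoe : ∀ p ∈ D, ∀ r : ℝ, (fun v => p v + r) ∈ D := fun p hp r => by
    simpa only [oplus_coe] using hWt p hp r
  intro p hp α
  induction α using EReal.rec with
  | bot =>
    -- `p v - ⊥ = p v + ⊤` is not of the form `p v ⊕ β`, so it is reached as a supremum of finite shifts.
    simpa only [EReal.sub_bot_eq_iSup_add_coe] using fun_iSup_mem hSup (hAddCoe p hp)
  | top =>
    simpa only [EReal.sub_top, iSup_of_empty] using
      fun_iSup_mem (ι := Empty) hSup (f := Empty.elim) Empty.rec
  | coe a =>
    simpa only [sub_eq_add_neg, ← EReal.coe_neg] using hAddCoe p hp (-a)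
end

section
/- Let (V, D) be an EReal-extended L-convex set and define d_D v w := ⨆_{p ∈ D} (p w - p v) for v, w ∈ V. Then (V, d_D) is an EReal-category: d_D u w ≤ d_D u v ⊕ d_D v w for all u, v, w ∈ V, and d_D v v ≤ 0 for all v ∈ V. -/
/-- The distance induced on the index set by an `EReal`-extended L-convex set. -/
noncomputable def distD {V : Type*} (D : Set (V → EReal)) (v w : V) : EReal :=
  ⨆ p ∈ D, (p w - p v)

lemma oplus_key (a b c : EReal) : c - a ≤ oplus (b - a) (c - b) := by
  unfold oplus
  induction a using EReal.rec <;> induction b using EReal.rec <;> induction c using EReal.rec <;>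
    simp_all [sub_eq_add_neg, ← EReal.coe_add, ← EReal.coe_neg] <;> norm_cast <;> linarith

lemma oplus_mono {x y z w : EReal} (h1 : x ≤ y) (h2 : z ≤ w) : oplus x z ≤ oplus y w := by
  unfold oplus
  exact EReal.neg_le_neg_iff.2 (add_le_add (EReal.neg_le_neg_iff.2 h1) (EReal.neg_le_neg_iff.2 h2))

lemma ereal_sub_self_le (a : EReal) : a - a ≤ 0 := by
  induction a using EReal.rec <;> simp [sub_eq_add_neg, ← EReal.coe_add, ← EReal.coe_neg]

theorem lconvex_induces_ereal_category {V : Type*} (D : Set (V → EReal))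
    (hOrd : ∀ S ⊆ D, (fun v => ⨆ p ∈ S, p v) ∈ D ∧ (fun v => ⨅ p ∈ S, p v) ∈ D)
    (hWt : ∀ p ∈ D, ∀ α : EReal, (fun v => oplus (p v) α) ∈ D) :
    (∀ u v w, distD D u w ≤ oplus (distD D u v) (distD D v w)) ∧
    (∀ v, distD D v v ≤ 0) := by
  constructor
  · intro u v w
    refine iSup₂_le fun p hp => ?_
    refine le_trans (oplus_key (p u) (p v) (p w)) (oplus_mono ?_ ?_)
    · exact le_iSup₂ (f := fun p (_ : p ∈ D) => p v - p u) p hp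
    · exact le_iSup₂ (f := fun p (_ : p ∈ D) => p w - p v) p hp
  · intro v
    exact iSup₂_le fun p _ => ereal_sub_self_le (p v)
end
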